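/- Define G(t) = t(1 - g(t)) where g(t) = (2/e)(e^{-2t}(t+1)+t-1)/t, i.e. G(t) = t - (2/e)(e^{-2t}(t+1)+t-1). Then for every t ∈ (0,1), exp(t(1 - g(t))) < (2 - t(1 - g(t)))(1 + t). -/

import Mathlib

noncomputable def g (t : ℝ) : ℝ :=
  (2 / Real.exp 1) * (Real.exp (-2 * t) * (t + 1) + t - 1) / t

/-!
Write `G t = t - (2 / e) * (exp (-2 * t) * (t + 1) + t - 1)`, which equals `t * (1 - g t)` for
`t ≠ 0`. Its derivative `1 - 2 / e + (2 / e) * exp (-2 * t) * (2 * t + 1)` is nonnegative for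
`t ≥ -1 / 2`, so `G` is monotone there. As `exp G` increases and `(2 - G) * (1 + t)` decreases in
`G`, on an interval `[a, b]` the inequality follows from `exp (G b) < (2 - G b) * (1 + a)`. Cutting
`(0, 1)` at `9 / 20`, `3 / 4` and `9 / 10`, it remains to bound `G` at these points and at `1`,
using `2 / e ≥ 0.735` and Taylor bounds for `exp (-b)`, and to check four numerical inequalities.
-/

open Real Set Finset

noncomputable def G (t : ℝ) : ℝ := t - 2 / exp 1 * (exp (-2 * t) * (t + 1) + t - 1)

lemma mul_one_sub_g {t : ℝ} (ht : t ≠ 0) : t * (1 - g t) = G t := by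
  unfold g G
  field_simp

lemma hasDerivAt_G (t : ℝ) :
    HasDerivAt G (1 - 2 / exp 1 * (1 - exp (-2 * t) * (2 * t + 1))) t := by
  have hexp : HasDerivAt (fun x ↦ exp (-2 * x)) (exp (-2 * t) * -2) t := by
    simpa using ((hasDerivAt_id t).const_mul (-2)).exp
  refine ((hasDerivAt_id' t).sub ((((hexp.mul ((hasDerivAt_id' t).add_const 1)).add
    (hasDerivAt_id' t)).sub_const 1).const_mul (2 / exp 1))).congr_deriv ?_
  ring

lemma monotoneOn_G : MonotoneOn G (Ici (-1 / 2)) := by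
  refine monotoneOn_of_deriv_nonneg (convex_Ici _)
    (fun t _ ↦ (hasDerivAt_G t).continuousAt.continuousWithinAt)
    (fun t _ ↦ (hasDerivAt_G t).differentiableAt.differentiableWithinAt) fun t ht ↦ ?_
  rw [interior_Ici, Set.mem_Ioi] at ht
  have hc : 2 / exp 1 ≤ 1 := by
    rw [div_le_one (exp_pos 1)]
    linarith [add_one_le_exp (1 : ℝ)]
  have hpos : 0 ≤ 2 / exp 1 * (exp (-2 * t) * (2 * t + 1)) := by
    have := exp_pos (-2 * t)
    exact mul_nonneg (by positivity) (mul_nonneg this.le (by linarith))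
  rw [(hasDerivAt_G t).deriv]
  linarith

lemma sum_sub_le_exp_neg {x : ℝ} (hx0 : 0 ≤ x) (hx1 : x ≤ 1) {n : ℕ} (hn : 0 < n) :
    ∑ m ∈ range n, (-x) ^ m / m.factorial - x ^ n * (n.succ / (n.factorial * n)) ≤ exp (-x) := by
  have h := exp_bound (x := -x) (by rwa [abs_neg, abs_of_nonneg hx0]) hn
  rw [abs_neg, abs_of_nonneg hx0] at h
  linarith [(abs_le.1 h).1]

lemma G_le_of_le_exp_neg {b s M : ℝ} (hs0 : 0 ≤ s) (hs : s ≤ exp (-b))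
    (hL : 0 ≤ s ^ 2 * (b + 1) + b - 1) (hM : b - 0.735 * (s ^ 2 * (b + 1) + b - 1) ≤ M) :
    G b ≤ M := by
  have hc : 0.735 ≤ 2 / exp 1 := by
    rw [le_div_iff₀ (exp_pos 1)]
    linarith [exp_one_lt_d9]
  have hsq : s ^ 2 ≤ exp (-2 * b) := by
    rw [show -2 * b = -b + -b by ring, exp_add, ← sq]
    exact pow_le_pow_left₀ hs0 hs 2
  have hb : 0 < b + 1 := by nlinarith
  have hh : s ^ 2 * (b + 1) + b - 1 ≤ exp (-2 * b) * (b + 1) + b - 1 := by gcongr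
  have := mul_le_mul hc hh hL (by positivity)
  unfold G
  linarith

lemma exp_G_lt_of_mem_Icc {a b M t : ℝ} (ha : -1 / 2 ≤ a) (ht : t ∈ Icc a b) (hGb : G b ≤ M)
    (hM : exp M < (2 - M) * (1 + a)) : exp (G t) < (2 - G t) * (1 + t) := by
  have hGt : G t ≤ M := (monotoneOn_G (ha.trans ht.1) (ha.trans (ht.1.trans ht.2)) ht.2).trans hGb
  have hM2 : 0 < 2 - M := pos_of_mul_pos_left ((exp_pos M).trans hM) (by linarith)
  calc exp (G t) ≤ exp M := exp_le_exp.2 hGt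
    _ < (2 - M) * (1 + a) := hM
    _ ≤ (2 - G t) * (1 + t) := by gcongr <;> linarith [ht.1]

lemma G_nine_twentieths_le : G (9 / 20) ≤ 0.44 := by
  refine G_le_of_le_exp_neg (s := 0.63) (by norm_num) ?_ (by norm_num) (by norm_num)
  refine le_trans ?_ (sum_sub_le_exp_neg (by norm_num) (by norm_num) (n := 8) (by norm_num))
  norm_num [sum_range_succ, Nat.factorial]

lemma G_three_quarters_le : G (3 / 4) ≤ 0.65 := by
  refine G_le_of_le_exp_neg (s := 0.47) (by norm_num) ?_ (by norm_num) (by norm_num)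
  refine le_trans ?_ (sum_sub_le_exp_neg (by norm_num) (by norm_num) (n := 8) (by norm_num))
  norm_num [sum_range_succ, Nat.factorial]

lemma G_nine_tenths_le : G (9 / 10) ≤ 0.75 := by
  refine G_le_of_le_exp_neg (s := 0.406) (by norm_num) ?_ (by norm_num) (by norm_num)
  refine le_trans ?_ (sum_sub_le_exp_neg (by norm_num) (by norm_num) (n := 8) (by norm_num))
  norm_num [sum_range_succ, Nat.factorial]

lemma G_one_le : G 1 ≤ 0.81 := by
  refine G_le_of_le_exp_neg (s := 0.3678) (by norm_num) ?_ (by norm_num) (by norm_num)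
  refine le_trans ?_ (sum_sub_le_exp_neg (by norm_num) (by norm_num) (n := 8) (by norm_num))
  norm_num [sum_range_succ, Nat.factorial]

lemma exp_lt_of_taylor_lt {x y : ℝ} (hx0 : 0 ≤ x) (hx1 : x ≤ 1)
    (h : ∑ m ∈ range 8, x ^ m / m.factorial + x ^ 8 * (8 + 1) / (Nat.factorial 8 * 8) < y) :
    exp x < y :=
  (exp_bound' hx0 hx1 (n := 8) (by norm_num)).trans_lt (by exact_mod_cast h)

theorem stmt_17 (t : ℝ) (ht : t ∈ Set.Ioo (0 : ℝ) 1) :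
    Real.exp (t * (1 - g t)) < (2 - t * (1 - g t)) * (1 + t) := by
  obtain ⟨ht0, ht1⟩ := ht
  rw [mul_one_sub_g ht0.ne']
  rcases le_total t (9 / 20) with h₁ | h₁
  · exact exp_G_lt_of_mem_Icc (by norm_num) ⟨ht0.le, h₁⟩ G_nine_twentieths_le
      (exp_lt_of_taylor_lt (by norm_num) (by norm_num) (by norm_num [sum_range_succ]))
  rcases le_total t (3 / 4) with h₂ | h₂
  · exact exp_G_lt_of_mem_Icc (by norm_num) ⟨h₁, h₂⟩ G_three_quarters_le
      (exp_lt_of_taylor_lt (by norm_num) (by norm_num) (by norm_num [sum_range_succ]))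
  rcases le_total t (9 / 10) with h₃ | h₃
  · exact exp_G_lt_of_mem_Icc (by norm_num) ⟨h₂, h₃⟩ G_nine_tenths_le
      (exp_lt_of_taylor_lt (by norm_num) (by norm_num) (by norm_num [sum_range_succ]))
  · exact exp_G_lt_of_mem_Icc (by norm_num) ⟨h₃, ht1.le⟩ G_one_le
      (exp_lt_of_taylor_lt (by norm_num) (by norm_num) (by norm_num [sum_range_succ]))
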